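/- Profile of a tensor: for opponent games O and O', and all n ≥ 1, profile[O ⊗ O']_n = Σ_{i=0}^{n} C(⌊n/2⌋, ⌊i/2⌋) · γ(i, n−i) · profile[O]_i · profile[O']_{n−i}, where γ(i,j) = 1 if i or j is zero or even, and 0 otherwise; also profile[O ⊗ O']_0 = 1. -/

import Mathlib

/-- Rose trees: the unlabeled shape of a game tree. -/
inductive RTree : Type where
  | node : List RTree → RTree

mutual
/-- An opponent game: a finite list of player games (its children). -/
inductive OGame : Type where
  | mk : List PGame → OGame
/-- A player game: a finite list of opponent games (its children). -/
inductive PGame : Type where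
  | mk : List OGame → PGame
end

mutual
/-- The dual of an opponent game. -/
def OGame.dual : OGame → PGame
  | .mk ps => .mk (ps.attach.map fun ⟨p, _⟩ => p.dual)
/-- The dual of a player game. -/
def PGame.dual : PGame → OGame
  | .mk os => .mk (os.attach.map fun ⟨o, _⟩ => o.dual)
end

mutual
/-- Strategy existence in an opponent game: a conjunction over children. -/
def OGame.strat : OGame → Bool
  | .mk ps => ps.attach.all fun ⟨p, _⟩ => p.strat
/-- Strategy existence in a player game: a disjunction over children. -/
def PGame.strat : PGame → Bool
  | .mk os => os.attach.any fun ⟨o, _⟩ => o.strat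
end

mutual
/-- Tensor of opponent games: `O ⊗ O' = (P_i ⊗ˡ O', O ⊗ʳ P'_k | …)`. -/
def otimes : OGame → OGame → OGame
  | .mk ps, .mk qs => .mk ((ps.attach.map fun ⟨p, _⟩ => oxl p (.mk qs)) ++
      (qs.attach.map fun ⟨q, _⟩ => oxr (.mk ps) q))
  termination_by o o' => sizeOf o + sizeOf o'
  decreasing_by
  · have := List.sizeOf_lt_of_mem ‹p ∈ ps›; simp_all; omega
  · have := List.sizeOf_lt_of_mem ‹q ∈ qs›; simp_all; omega
/-- Mixed tensor `O ⊗ʳ P = {O ⊗ O_j | j ∈ J}`. -/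
def oxr : OGame → PGame → PGame
  | o, .mk os => .mk (os.attach.map fun ⟨oj, _⟩ => otimes o oj)
  termination_by o p => sizeOf o + sizeOf p
  decreasing_by
  · have := List.sizeOf_lt_of_mem ‹oj ∈ os›; simp_all; omega
/-- Mixed tensor `P ⊗ˡ O = {O_j ⊗ O | j ∈ J}`. -/
def oxl : PGame → OGame → PGame
  | .mk os, o => .mk (os.attach.map fun ⟨oj, _⟩ => otimes oj o)
  termination_by p o => sizeOf p + sizeOf o
  decreasing_by
  · have := List.sizeOf_lt_of_mem ‹oj ∈ os›; simp_all; omega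
end

mutual
/-- Par of player games: `P ⅋ P' = {O_j ⅋ˡ P', P ⅋ʳ O'_k | …}`. -/
def parr : PGame → PGame → PGame
  | .mk os, .mk qs => .mk ((os.attach.map fun ⟨o, _⟩ => parrOP o (.mk qs)) ++
      (qs.attach.map fun ⟨q, _⟩ => parrPO (.mk os) q))
  termination_by p p' => sizeOf p + sizeOf p'
  decreasing_by
  · have := List.sizeOf_lt_of_mem ‹o ∈ os›; simp_all; omega
  · have := List.sizeOf_lt_of_mem ‹q ∈ qs›; simp_all; omega
/-- Mixed par `P ⅋ʳ O = (P ⅋ P_i | i ∈ I)`. -/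
def parrPO : PGame → OGame → OGame
  | p, .mk ps => .mk (ps.attach.map fun ⟨pi, _⟩ => parr p pi)
  termination_by p o => sizeOf p + sizeOf o
  decreasing_by
  · have := List.sizeOf_lt_of_mem ‹pi ∈ ps›; simp_all; omega
/-- Mixed par `O ⅋ˡ P = (P_i ⅋ P | i ∈ I)`. -/
def parrOP : OGame → PGame → OGame
  | .mk ps, p => .mk (ps.attach.map fun ⟨pi, _⟩ => parr pi p)
  termination_by o p => sizeOf o + sizeOf p
  decreasing_by
  · have := List.sizeOf_lt_of_mem ‹pi ∈ ps›; simp_all; omega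
end

mutual
/-- The exponential `!O`: `!() = ()` and `!O = ⊗_{i∈I} (b_i : !'P_i)` for `I ≠ ∅`. -/
def bang : OGame → OGame
  | .mk [] => .mk []
  | .mk (p :: ps) =>
      (ps.attach.map fun ⟨q, _⟩ => OGame.mk [bang' q]).foldl otimes (OGame.mk [bang' p])
/-- The auxiliary exponential `!'{a_j : O_j} = {a_j : !O_j}`. -/
def bang' : PGame → PGame
  | .mk os => .mk (os.attach.map fun ⟨o, _⟩ => bang o)
end

mutual
/-- Underlying unlabeled tree of an opponent game. -/
def OGame.toTree : OGame → RTree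
  | .mk ps => .node (ps.attach.map fun ⟨p, _⟩ => p.toTree)
/-- Underlying unlabeled tree of a player game. -/
def PGame.toTree : PGame → RTree
  | .mk os => .node (os.attach.map fun ⟨o, _⟩ => o.toTree)
end

/-- Number of nodes (including the root). -/
def RTree.nodes : RTree → ℕ
  | .node cs => 1 + (cs.attach.map fun ⟨c, _⟩ => c.nodes).sum

/-- Number of parent-child edges. -/
def RTree.edges : RTree → ℕ
  | .node cs => cs.length + (cs.attach.map fun ⟨c, _⟩ => c.edges).sum

/-- Number of leaves. -/
def RTree.leaves : RTree → ℕ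
  | .node [] => 1
  | .node cs => (cs.attach.map fun ⟨c, _⟩ => c.leaves).sum

/-- Uniform size: `u[leaf] = 0`, `u[node with n children] = (n-1) + Σ u[child]`. -/
def RTree.usize : RTree → ℕ
  | .node [] => 0
  | .node cs => (cs.length - 1) + (cs.attach.map fun ⟨c, _⟩ => c.usize).sum

/-- Depth: leaves have depth 0. -/
def RTree.depth : RTree → ℕ
  | .node cs => (cs.attach.map fun ⟨c, _⟩ => c.depth + 1).foldr max 0

/-- `profile t k` is the number of nodes of `t` at depth `k`. -/
def RTree.profile : RTree → ℕ → ℕ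
  | _, 0 => 1
  | .node cs, k + 1 => (cs.attach.map fun ⟨c, _⟩ => c.profile k).sum

mutual
/-- Number of player nodes of an opponent game. -/
def OGame.pnodes : OGame → ℕ
  | .mk ps => (ps.attach.map fun ⟨p, _⟩ => p.pnodes).sum
/-- Number of player nodes of a player game (the root counts). -/
def PGame.pnodes : PGame → ℕ
  | .mk os => 1 + (os.attach.map fun ⟨o, _⟩ => o.pnodes).sum
end

mutual
/-- Number of edges leaving opponent nodes, for an opponent game. -/
def OGame.eo : OGame → ℕ
  | .mk ps => ps.length + (ps.attach.map fun ⟨p, _⟩ => p.eo).sum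
/-- Number of edges leaving opponent nodes, for a player game. -/
def PGame.eo : PGame → ℕ
  | .mk os => (os.attach.map fun ⟨o, _⟩ => o.eo).sum
end

mutual
/-- Number of edges leaving player nodes, for an opponent game. -/
def OGame.ep : OGame → ℕ
  | .mk ps => (ps.attach.map fun ⟨p, _⟩ => p.ep).sum
/-- Number of edges leaving player nodes, for a player game. -/
def PGame.ep : PGame → ℕ
  | .mk os => os.length + (os.attach.map fun ⟨o, _⟩ => o.ep).sum
end

/-- `γ(i,j) = 1` if `i` or `j` is zero or even, else `0`. -/
def gammaCoef (i j : ℕ) : ℕ :=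
  if i = 0 ∨ j = 0 ∨ i % 2 = 0 ∨ j % 2 = 0 then 1 else 0

mutual
/-- The single-branch player chain `L_n`. -/
def Lp : ℕ → PGame
  | 0 => .mk []
  | n + 1 => .mk [Lo n]
/-- The single-branch opponent chain `L'_n`. -/
def Lo : ℕ → OGame
  | 0 => .mk []
  | n + 1 => .mk [Lp n]
end

/-!
In `O ⊗ O'` every opponent move is answered by a player move in the same component, so the
tensor grows two levels at a time in one component or the other. Let `L = leftStep` and
`R = rightStep` sum a function `F : OGame → OGame → ℕ` over the grandchildren of its left, resp.
right, argument. Then `T n (O, O') := profile[O ⊗ O']_n` satisfies `T (n + 2) = (L + R) (T n)`,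
and as `L` and `R` commute, the binomial theorem gives `T (2m + r) = ∑ₖ C(m, k) Lᵏ Rᵐ⁻ᵏ (T r)`.
With `T 0 = 1` and `T 1 (O, O') = profile[O]_1 + profile[O']_1` this is the claimed formula
split by the parity of `i`; `γ(i, n - i)` kills the terms where `i` and `n - i` are both odd.
-/

lemma List.sum_map_sum_map_comm {α β M : Type*} [AddCommMonoid M] (l : List α) (l' : List β)
    (f : α → β → M) :
    (l.map fun a => (l'.map (f a)).sum).sum = (l'.map fun b => (l.map (f · b)).sum).sum := by
  simpa using Multiset.sum_map_sum_map (l : Multiset α) (l' : Multiset β) (f := f)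

lemma Finset.sum_range_two_mul {M : Type*} [AddCommMonoid M] (f : ℕ → M) (N : ℕ) :
    ∑ i ∈ Finset.range (2 * N), f i =
      ∑ k ∈ Finset.range N, (f (2 * k) + f (2 * k + 1)) := by
  induction N with
  | zero => simp
  | succ N ih =>
    rw [Finset.sum_range_succ, ← ih, mul_add, mul_one, ← add_assoc, Finset.sum_range_succ,
      Finset.sum_range_succ]

def OGame.moves : OGame → List PGame
  | .mk ps => ps

def PGame.moves : PGame → List OGame
  | .mk os => os

def OGame.grandchildren (O : OGame) : List OGame := O.moves.flatMap PGame.moves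

lemma OGame.sum_map_grandchildren {M : Type*} [AddCommMonoid M] (O : OGame) (f : OGame → M) :
    (O.grandchildren.map f).sum = (O.moves.map fun p => (p.moves.map f).sum).sum := by
  simp only [OGame.grandchildren]
  induction O.moves with
  | nil => rfl
  | cons p ps ih => simp [ih]

lemma OGame.profile_succ (O : OGame) (n : ℕ) :
    O.toTree.profile (n + 1) = (O.moves.map (·.toTree.profile n)).sum := by
  obtain ⟨ps⟩ := O
  simp [OGame.toTree, RTree.profile, OGame.moves, List.map_attach_eq_pmap, Function.comp_def]

lemma PGame.profile_succ (P : PGame) (n : ℕ) :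
    P.toTree.profile (n + 1) = (P.moves.map (·.toTree.profile n)).sum := by
  obtain ⟨os⟩ := P
  simp [PGame.toTree, RTree.profile, PGame.moves, List.map_attach_eq_pmap, Function.comp_def]

lemma OGame.profile_add_two (O : OGame) (n : ℕ) :
    O.toTree.profile (n + 2) = (O.grandchildren.map (·.toTree.profile n)).sum := by
  simp only [OGame.sum_map_grandchildren, OGame.profile_succ, PGame.profile_succ]

lemma profile_otimes_succ (O O' : OGame) (n : ℕ) :
    (otimes O O').toTree.profile (n + 1) =
      (O.moves.map fun p => (oxl p O').toTree.profile n).sum +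
        (O'.moves.map fun q => (oxr O q).toTree.profile n).sum := by
  obtain ⟨ps⟩ := O
  obtain ⟨qs⟩ := O'
  simp [otimes, OGame.profile_succ, OGame.moves, Function.comp_def]

lemma profile_oxl_succ (P : PGame) (O' : OGame) (n : ℕ) :
    (oxl P O').toTree.profile (n + 1) =
      (P.moves.map fun o => (otimes o O').toTree.profile n).sum := by
  obtain ⟨os⟩ := P
  simp [oxl, PGame.profile_succ, PGame.moves, Function.comp_def]

lemma profile_oxr_succ (O : OGame) (P' : PGame) (n : ℕ) :
    (oxr O P').toTree.profile (n + 1) =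
      (P'.moves.map fun o => (otimes O o).toTree.profile n).sum := by
  obtain ⟨os⟩ := P'
  simp [oxr, PGame.profile_succ, PGame.moves, Function.comp_def]

def leftStep : AddMonoid.End (OGame → OGame → ℕ) where
  toFun F O O' := (O.grandchildren.map (F · O')).sum
  map_zero' := by ext; simp
  map_add' F G := by ext; exact List.sum_map_add

def rightStep : AddMonoid.End (OGame → OGame → ℕ) where
  toFun F O O' := (O'.grandchildren.map (F O)).sum
  map_zero' := by ext; simp [Pi.zero_def]
  map_add' F G := by ext; exact List.sum_map_add

lemma leftStep_apply (F : OGame → OGame → ℕ) (O O' : OGame) :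
    leftStep F O O' = (O.grandchildren.map (F · O')).sum := rfl

lemma rightStep_apply (F : OGame → OGame → ℕ) (O O' : OGame) :
    rightStep F O O' = (O'.grandchildren.map (F O)).sum := rfl

lemma commute_leftStep_rightStep : Commute leftStep rightStep := by
  ext F O O'
  exact List.sum_map_sum_map_comm _ _ _

def profileProd (i j : ℕ) (O O' : OGame) : ℕ := O.toTree.profile i * O'.toTree.profile j

lemma leftStep_profileProd (i j : ℕ) :
    leftStep (profileProd i j) = profileProd (i + 2) j := by
  ext O O'
  exact (List.sum_map_mul_right _ _ _).trans (by rw [profileProd, OGame.profile_add_two])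

lemma rightStep_profileProd (i j : ℕ) :
    rightStep (profileProd i j) = profileProd i (j + 2) := by
  ext O O'
  exact (List.sum_map_mul_left _ _ _).trans (by rw [profileProd, OGame.profile_add_two])

lemma leftStep_pow_profileProd (k i j : ℕ) :
    (leftStep ^ k) (profileProd i j) = profileProd (2 * k + i) j := by
  induction k generalizing i with
  | zero => simp
  | succ k ih =>
    rw [pow_succ, AddMonoid.End.coe_mul, Function.comp_apply, leftStep_profileProd, ih]
    ring_nf

lemma rightStep_pow_profileProd (l i j : ℕ) :
    (rightStep ^ l) (profileProd i j) = profileProd i (2 * l + j) := by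
  induction l generalizing j with
  | zero => simp
  | succ l ih =>
    rw [pow_succ, AddMonoid.End.coe_mul, Function.comp_apply, rightStep_profileProd, ih]
    ring_nf

lemma leftStep_pow_mul_rightStep_pow_profileProd (k l i j : ℕ) :
    (leftStep ^ k * rightStep ^ l) (profileProd i j) = profileProd (2 * k + i) (2 * l + j) := by
  rw [AddMonoid.End.coe_mul, Function.comp_apply, rightStep_pow_profileProd,
    leftStep_pow_profileProd]

def tensorProfile (n : ℕ) (O O' : OGame) : ℕ := (otimes O O').toTree.profile n

lemma tensorProfile_zero : tensorProfile 0 = profileProd 0 0 := by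
  ext O O'
  simp [tensorProfile, profileProd, RTree.profile]

lemma tensorProfile_one : tensorProfile 1 = profileProd 1 0 + profileProd 0 1 := by
  ext O O'
  rw [tensorProfile, profile_otimes_succ]
  simp [profileProd, OGame.profile_succ, RTree.profile]

lemma tensorProfile_add_two (n : ℕ) :
    tensorProfile (n + 2) = (leftStep + rightStep) (tensorProfile n) := by
  ext O O'
  change _ = leftStep _ O O' + rightStep _ O O'
  simp only [tensorProfile, profile_otimes_succ, profile_oxl_succ, profile_oxr_succ,
    leftStep_apply, rightStep_apply, OGame.sum_map_grandchildren]
  rfl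

lemma tensorProfile_two_mul_add_eq_pow (m r : ℕ) :
    tensorProfile (2 * m + r) = ((leftStep + rightStep) ^ m) (tensorProfile r) := by
  induction m with
  | zero => simp
  | succ m ih =>
    rw [show 2 * (m + 1) + r = 2 * m + r + 2 by ring, tensorProfile_add_two, ih, pow_succ']
    rfl

lemma tensorProfile_two_mul_add_eq_sum (m r : ℕ) :
    tensorProfile (2 * m + r) = ∑ k ∈ Finset.range (m + 1),
      m.choose k • (leftStep ^ k * rightStep ^ (m - k)) (tensorProfile r) := by
  rw [tensorProfile_two_mul_add_eq_pow, commute_leftStep_rightStep.add_pow]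
  refine (AddMonoidHom.finsetSum_apply _ _ _).trans (Finset.sum_congr rfl fun k _ => ?_)
  exact map_nsmul (leftStep ^ k * rightStep ^ (m - k)) _ _

lemma profile_otimes_two_mul (O O' : OGame) (m : ℕ) :
    (otimes O O').toTree.profile (2 * m) =
      ∑ k ∈ Finset.range (m + 1),
        m.choose k * (O.toTree.profile (2 * k) * O'.toTree.profile (2 * (m - k))) := by
  simpa only [tensorProfile_zero, leftStep_pow_mul_rightStep_pow_profileProd, Finset.sum_apply,
    Pi.smul_apply, smul_eq_mul, add_zero, tensorProfile, profileProd]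
    using congrFun₂ (tensorProfile_two_mul_add_eq_sum m 0) O O'

lemma profile_otimes_two_mul_add_one (O O' : OGame) (m : ℕ) :
    (otimes O O').toTree.profile (2 * m + 1) =
      ∑ k ∈ Finset.range (m + 1), m.choose k *
        (O.toTree.profile (2 * k + 1) * O'.toTree.profile (2 * (m - k)) +
          O.toTree.profile (2 * k) * O'.toTree.profile (2 * (m - k) + 1)) := by
  simpa only [tensorProfile_one, map_add, leftStep_pow_mul_rightStep_pow_profileProd,
    Finset.sum_apply, Pi.smul_apply, Pi.add_apply, smul_eq_mul, add_zero, tensorProfile,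
    profileProd]
    using congrFun₂ (tensorProfile_two_mul_add_eq_sum m 1) O O'

lemma gammaCoef_of_even_left {i : ℕ} (j : ℕ) (hi : Even i) : gammaCoef i j = 1 :=
  if_pos (Or.inr (Or.inr (Or.inl (Nat.even_iff.mp hi))))

lemma gammaCoef_of_even_right (i : ℕ) {j : ℕ} (hj : Even j) : gammaCoef i j = 1 :=
  if_pos (Or.inr (Or.inr (Or.inr (Nat.even_iff.mp hj))))

lemma gammaCoef_of_odd_of_odd {i j : ℕ} (hi : Odd i) (hj : Odd j) : gammaCoef i j = 0 := by
  rw [Nat.odd_iff] at hi hj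
  exact if_neg (by omega)

lemma sum_choose_gammaCoef_two_mul (x y : ℕ → ℕ) (m : ℕ) :
    ∑ i ∈ Finset.range (2 * m + 1),
        (2 * m / 2).choose (i / 2) * gammaCoef i (2 * m - i) * x i * y (2 * m - i) =
      ∑ k ∈ Finset.range (m + 1), m.choose k * (x (2 * k) * y (2 * (m - k))) := by
  have h_even : ∀ k ≤ m, (2 * m / 2).choose (2 * k / 2) * gammaCoef (2 * k) (2 * m - 2 * k) *
      x (2 * k) * y (2 * m - 2 * k) = m.choose k * (x (2 * k) * y (2 * (m - k))) := by
    intro k hk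
    rw [gammaCoef_of_even_left _ (even_two_mul k), Nat.mul_div_cancel_left _ two_pos,
      Nat.mul_div_cancel_left _ two_pos, ← Nat.mul_sub]
    ring
  have h_odd : ∀ k < m, gammaCoef (2 * k + 1) (2 * m - (2 * k + 1)) = 0 := fun k hk =>
    gammaCoef_of_odd_of_odd (odd_two_mul_add_one k) (by rw [Nat.odd_iff]; omega)
  rw [Finset.sum_range_succ, Finset.sum_range_two_mul, Finset.sum_range_succ, h_even m le_rfl]
  congr 1
  refine Finset.sum_congr rfl fun k hk => ?_
  rw [Finset.mem_range] at hk
  rw [h_odd k hk, h_even k hk.le]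
  ring

lemma sum_choose_gammaCoef_two_mul_add_one (x y : ℕ → ℕ) (m : ℕ) :
    ∑ i ∈ Finset.range (2 * m + 1 + 1),
        ((2 * m + 1) / 2).choose (i / 2) * gammaCoef i (2 * m + 1 - i) * x i * y (2 * m + 1 - i) =
      ∑ k ∈ Finset.range (m + 1), m.choose k *
        (x (2 * k + 1) * y (2 * (m - k)) + x (2 * k) * y (2 * (m - k) + 1)) := by
  rw [show 2 * m + 1 + 1 = 2 * (m + 1) by ring, Finset.sum_range_two_mul]
  refine Finset.sum_congr rfl fun k hk => ?_
  rw [Finset.mem_range] at hk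
  have hm : (2 * m + 1) / 2 = m := by omega
  have hk0 : 2 * k / 2 = k := by omega
  have hk1 : (2 * k + 1) / 2 = k := by omega
  have hr0 : 2 * m + 1 - 2 * k = 2 * (m - k) + 1 := by omega
  have hr1 : 2 * m + 1 - (2 * k + 1) = 2 * (m - k) := by omega
  rw [hm, hk0, hk1, hr0, hr1, gammaCoef_of_even_left _ (even_two_mul k),
    gammaCoef_of_even_right _ (even_two_mul (m - k))]
  ring

/-- profile of the tensor of opponent games. -/
theorem profile_otimes (O O' : OGame) :
    (otimes O O').toTree.profile 0 = 1 ∧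
    ∀ n : ℕ, 1 ≤ n →
      (otimes O O').toTree.profile n =
        ∑ i ∈ Finset.range (n + 1),
          Nat.choose (n / 2) (i / 2) * gammaCoef i (n - i) *
            O.toTree.profile i * O'.toTree.profile (n - i) := by
  refine ⟨rfl, fun n _ => ?_⟩
  obtain ⟨m, rfl | rfl⟩ := Nat.even_or_odd' n
  · rw [profile_otimes_two_mul, sum_choose_gammaCoef_two_mul]
  · rw [profile_otimes_two_mul_add_one, sum_choose_gammaCoef_two_mul_add_one]
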